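/- arXiv:math/0504205 — 2 statements merged into one kernel-verified Lean document; each statement's English description precedes it below -/
import Mathlib

section
/- Theorem 4: Let G be a representable Menger (2,n)-semigroup and let χ, π be binary relations on G. The following are equivalent: (i) the pair (χ, π) is projection representable for G; (ii) the pair (χ, π) is faithfully projection representable for G; (iii) χ is an l-regular and v-negative quasi-order and π = χ ∩ χ⁻¹. -/
/-!
(i) ⇒ (iii): under superposition and composition, domains shrink to those of the arguments and
are monotone in the outer function; combining both along a composition string gives the second
half of v-negativity.

(iii) ⇒ (ii): `G` acts on `Option G` (`none` a placeholder), a tuple `w` of elements by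
`g ↦ g[w]` and a tuple `(μ₁(L), …, μₙ(L))` by `g ↦ g ∘ L`; axioms (4) and (7) make this well
defined, and (5), (6) make it a representation. For each `a` restrict the values to those
`χ`-above `a`; v-negativity and transitivity keep this a representation, since every argument
is then `χ`-above `a` too. The disjoint union over `a` of these sheets is the required
representation: l-regularity makes domains monotone along `χ`, and the placeholder tuple in the
sheet of `g₁` is in the domain of `g₂` exactly when `χ g₁ g₂`, which also gives faithfulness.
-/

universe u

/-- A partial `n`-place function on `A` (`none` = undefined). -/
abbrev NPlace (A : Type u) (n : ℕ) := (Fin n → A) → Option A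

/-- The domain of a partial `n`-place function. -/
def pdom {A : Type u} {n : ℕ} (f : NPlace A n) : Set (Fin n → A) :=
  {a | (f a).isSome}

/-- Superposition `f[g₁…gₙ]` of partial `n`-place functions. -/
def superpose {A : Type u} {n : ℕ} (f : NPlace A n) (g : Fin n → NPlace A n) : NPlace A n :=
  fun a => if h : ∀ i, (g i a).isSome then f (fun i => (g i a).get (h i)) else none

/-- The binary composition `f ∘ᵢ g` of partial `n`-place functions. -/
def opc {A : Type u} {n : ℕ} (i : Fin n) (f g : NPlace A n) : NPlace A n :=
  fun a => (g a).bind fun b => f (Function.update a i b)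

/-- A Menger (2,n)-semigroup: an (n+1)-ary superassociative operation `sup`
(written `x[y₁…yₙ]`) together with `n` associative binary operations `op i`. -/
structure MengerSg (G : Type u) (n : ℕ) where
  sup : G → (Fin n → G) → G
  op : Fin n → G → G → G
  superassoc : ∀ (x : G) (y z : Fin n → G),
    sup (sup x y) z = sup x fun i => sup (y i) z
  op_assoc : ∀ (i : Fin n) (x y z : G), op i (op i x y) z = op i x (op i y z)

namespace MengerSg

variable {G : Type u} {n : ℕ}

/-- Applying a composition string `L = [(i₁,y₁),…,(i_s,y_s)]` to `x`:
`x ∘_{i₁} y₁ ∘_{i₂} y₂ ⋯ ∘_{i_s} y_s` (left to right). -/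
def applyStr (M : MengerSg G n) (x : G) (L : List (Fin n × G)) : G :=
  L.foldl (fun a p => M.op p.1 a p.2) x

/-- `μᵢ(L)`: if `i` occurs in the composition string `L` with least position `k`,
this is `some (yₖ ∘_{i_{k+1}} y_{k+1} ⋯ ∘_{i_s} y_s)`; otherwise `none`. -/
def mu (M : MengerSg G n) (i : Fin n) : List (Fin n × G) → Option G
  | [] => none
  | p :: rest => if p.1 = i then some (applyStr M p.2 rest) else mu M i rest

/-- Conditions (4)–(7): the Menger (2,n)-semigroup is representable. -/
def Representable (M : MengerSg G n) : Prop :=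
  (∀ L₁ L₂ : List (Fin n × G), L₁ ≠ [] → L₂ ≠ [] →
      (∀ i, mu M i L₁ = mu M i L₂) → ∀ g, applyStr M g L₁ = applyStr M g L₂) ∧
  (∀ (i : Fin n) (x y : G) (z : Fin n → G),
      M.sup (M.op i x y) z = M.sup x (Function.update z i (M.sup y z))) ∧
  (∀ (i : Fin n) (x : G) (y : Fin n → G) (z : G),
      M.op i (M.sup x y) z = M.sup x fun j => M.op i (y j) z) ∧
  (∀ L : List (Fin n × G), L ≠ [] → ∀ m : Fin n → G,
      (∀ i, mu M i L = some (m i)) → ∀ x, applyStr M x L = M.sup x m)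

/-- A binary relation is l-regular. -/
def LRegular (M : MengerSg G n) (r : G → G → Prop) : Prop :=
  ∀ x y, r x y →
    (∀ z : Fin n → G, r (M.sup x z) (M.sup y z)) ∧
    (∀ (i : Fin n) (z : G), r (M.op i x z) (M.op i y z))

/-- A binary relation is l-cancellative. -/
def LCancellative (M : MengerSg G n) (r : G → G → Prop) : Prop :=
  (∀ (x y : G) (z : Fin n → G), r (M.sup x z) (M.sup y z) → r x y) ∧
  (∀ (x y : G) (i : Fin n) (z : G), r (M.op i x z) (M.op i y z) → r x y)

/-- A binary relation is v-negative. -/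
def VNegative (M : MengerSg G n) (r : G → G → Prop) : Prop :=
  (∀ (x : G) (y : Fin n → G) (i : Fin n), r (M.sup x y) (y i)) ∧
  (∀ (x : G) (L : List (Fin n × G)), L ≠ [] →
      ∀ (j : Fin n) (m : G), mu M j L = some m → r (applyStr M x L) m)

/-- A quasi-order is a reflexive and transitive relation. -/
def QuasiOrder (r : G → G → Prop) : Prop := Reflexive r ∧ Transitive r

/-- `z` is a zero of the Menger (2,n)-semigroup. -/
def IsZero (M : MengerSg G n) (z : G) : Prop :=
  (∀ (i : Fin n) (g : G), M.op i z g = z ∧ M.op i g z = z) ∧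
  (∀ g : Fin n → G, M.sup z g = z) ∧
  (∀ (g : G) (gs : Fin n → G) (i : Fin n), M.sup g (Function.update gs i z) = z)

/-- A 0-quasi-equivalence: a symmetric relation which is reflexive at every non-zero
element, and such that any zero related to something is related to itself. -/
def ZeroQuasiEquiv (M : MengerSg G n) (r : G → G → Prop) : Prop :=
  Symmetric r ∧ (∀ g, ¬ M.IsZero g → r g g) ∧
  (∀ z, M.IsZero z → (∃ h, r z h) → r z z)

/-- `P` is a representation of the Menger (2,n)-semigroup by `n`-place functions. -/
def IsRep (M : MengerSg G n) {A : Type u} (P : G → NPlace A n) : Prop :=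
  (∀ (x : G) (y : Fin n → G), P (M.sup x y) = superpose (P x) fun i => P (y i)) ∧
  (∀ (i : Fin n) (x y : G), P (M.op i x y) = opc i (P x) (P y))

/-- The set `Tₙ(G)` of translations: the least set of maps `G → G` containing the
identity and closed under `t ↦ (x ↦ a[b₁…b_{i−1} t(x) b_{i+1}…bₙ])`. -/
inductive IsTransl (M : MengerSg G n) : (G → G) → Prop
  | id : IsTransl M _root_.id
  | step (t : G → G) (ht : IsTransl M t) (i : Fin n) (a : G) (b : Fin n → G) :
      IsTransl M fun x => M.sup a (Function.update b i (t x))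

/-- The relation `δ₁`: `g₁ = t(g₂)` for some `t ∈ Tₙ(G)`. -/
def delta1 (M : MengerSg G n) : G → G → Prop :=
  fun g₁ g₂ => ∃ t : G → G, IsTransl M t ∧ g₁ = t g₂

/-- The relation `δ₂`: `g₁ = (x∘_{i₁}y₁⋯∘_{i_s}y_s)` and `g₂ = μᵢ(L)`, possibly both
superposed with a common `z̄ ∈ Gⁿ`. -/
def delta2 (M : MengerSg G n) : G → G → Prop :=
  fun g₁ g₂ => ∃ (x : G) (L : List (Fin n × G)) (i : Fin n) (m : G),
    L ≠ [] ∧ mu M i L = some m ∧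
    ((g₁ = applyStr M x L ∧ g₂ = m) ∨
      ∃ z : Fin n → G, g₁ = M.sup (applyStr M x L) z ∧ g₂ = M.sup m z)

/-- `χ(π)`: the transitive closure of `(δ₂ ∪ Δ_G) ∘ δ₁ ∘ π` (relations applied right
to left in the paper's notation, i.e. first `π`, then `δ₁`, then `δ₂ ∪ Δ_G`). -/
def chiRel (M : MengerSg G n) (π : G → G → Prop) : G → G → Prop :=
  Relation.TransGen
    (Relation.Comp (Relation.Comp π (delta1 M)) fun a b => delta2 M a b ∨ a = b)

/-- `χ₀`: the transitive closure of `(δ₂ ∪ Δ_G) ∘ δ₁`. -/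
def chi0 (M : MengerSg G n) : G → G → Prop :=
  Relation.TransGen
    (Relation.Comp (delta1 M) fun a b => delta2 M a b ∨ a = b)

end MengerSg

open MengerSg

section PartialFunctions

variable {A : Type u} {n : ℕ}

lemma mem_pdom {f : NPlace A n} {a : Fin n → A} : a ∈ pdom f ↔ ∃ v, f a = some v :=
  Option.isSome_iff_exists

lemma superpose_of_forall_eq_some {f : NPlace A n} {g : Fin n → NPlace A n}
    {a b : Fin n → A} (hb : ∀ i, g i a = some (b i)) : superpose f g a = f b := by
  have hs : ∀ i, (g i a).isSome := fun i => by simp [hb i]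
  have hget : (fun i => (g i a).get (hs i)) = b := funext fun i => by simp [hb i]
  simp only [superpose, dif_pos hs, hget]

lemma superpose_of_eq_none {f : NPlace A n} {g : Fin n → NPlace A n} {a : Fin n → A}
    {i : Fin n} (hi : g i a = none) : superpose f g a = none := by
  have hs : ¬ ∀ j, (g j a).isSome := fun hs => by simpa [hi] using hs i
  simp only [superpose, dif_neg hs]

lemma superpose_eq_some_iff {f : NPlace A n} {g : Fin n → NPlace A n} {a : Fin n → A}
    {v : A} : superpose f g a = some v ↔ ∃ b, (∀ i, g i a = some (b i)) ∧ f b = some v := by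
  constructor
  · intro hv
    by_cases hs : ∀ i, (g i a).isSome
    · have hb : ∀ i, g i a = some ((g i a).get (hs i)) := fun i => (Option.some_get _).symm
      exact ⟨_, hb, (superpose_of_forall_eq_some hb).symm.trans hv⟩
    · obtain ⟨i, hi⟩ := not_forall.mp hs
      simp [superpose_of_eq_none (f := f) (Option.not_isSome_iff_eq_none.mp hi)] at hv
  · rintro ⟨b, hb, hv⟩
    rwa [superpose_of_forall_eq_some hb]

lemma opc_eq_some_iff {i : Fin n} {f g : NPlace A n} {a : Fin n → A} {v : A} :
    opc i f g a = some v ↔ ∃ u, g a = some u ∧ f (Function.update a i u) = some v :=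
  Option.bind_eq_some_iff

lemma pdom_superpose_subset (f : NPlace A n) (g : Fin n → NPlace A n) (i : Fin n) :
    pdom (superpose f g) ⊆ pdom (g i) := by
  intro a
  simp only [mem_pdom, superpose_eq_some_iff]
  rintro ⟨-, b, hb, -⟩
  exact ⟨b i, hb i⟩

lemma pdom_superpose_mono {f f' : NPlace A n} (h : pdom f ⊆ pdom f') (g : Fin n → NPlace A n) :
    pdom (superpose f g) ⊆ pdom (superpose f' g) := by
  intro a
  simp only [mem_pdom, superpose_eq_some_iff]
  rintro ⟨v, b, hb, hv⟩
  obtain ⟨v', hv'⟩ := mem_pdom.mp (h (mem_pdom.mpr ⟨_, hv⟩))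
  exact ⟨v', b, hb, hv'⟩

lemma pdom_opc_subset (i : Fin n) (f g : NPlace A n) : pdom (opc i f g) ⊆ pdom g := by
  intro a
  simp only [mem_pdom, opc_eq_some_iff]
  rintro ⟨-, u, hu, -⟩
  exact ⟨u, hu⟩

lemma pdom_opc_mono (i : Fin n) {f f' : NPlace A n} (h : pdom f ⊆ pdom f') (g : NPlace A n) :
    pdom (opc i f g) ⊆ pdom (opc i f' g) := by
  intro a
  simp only [mem_pdom, opc_eq_some_iff]
  rintro ⟨v, u, hu, hv⟩
  obtain ⟨v', hv'⟩ := mem_pdom.mp (h (mem_pdom.mpr ⟨_, hv⟩))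
  exact ⟨v', u, hu, hv'⟩

open Classical in
noncomputable def restrictCod (f : NPlace A n) (S : Set A) : NPlace A n :=
  fun a => (f a).filter fun v => v ∈ S

lemma restrictCod_eq_some_iff {f : NPlace A n} {S : Set A} {a : Fin n → A} {v : A} :
    restrictCod f S a = some v ↔ f a = some v ∧ v ∈ S := by
  simp [restrictCod, Option.filter_eq_some_iff]

open Classical in
/-- A tuple lies in the copy `{c} × A` when all its first coordinates equal `c`;
the coordinate `i₀` only serves to read off that common value. -/
noncomputable def disjointSum {ι : Type*} (f : ι → NPlace A n) (i₀ : Fin n) : NPlace (ι × A) n :=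
  fun b => if ∀ i, (b i).1 = (b i₀).1 then (f (b i₀).1 (Prod.snd ∘ b)).map ((b i₀).1, ·) else none

variable {ι : Type*}

lemma disjointSum_eq_some_iff {f : ι → NPlace A n} {i₀ : Fin n} {b : Fin n → ι × A}
    {p : ι × A} :
    disjointSum f i₀ b = some p ↔ (∀ i, (b i).1 = p.1) ∧ f p.1 (Prod.snd ∘ b) = some p.2 := by
  unfold disjointSum
  split_ifs with hb
  · constructor
    · intro h
      obtain ⟨v, hv, rfl⟩ := Option.map_eq_some_iff.mp h
      exact ⟨hb, hv⟩
    · rintro ⟨h₁, h₂⟩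
      rw [h₁ i₀, h₂]
      rfl
  · simp only [false_iff, not_and]
    exact fun h => absurd (fun i => (h i).trans (h i₀).symm) hb

lemma disjointSum_const_fst (f : ι → NPlace A n) (i₀ : Fin n) (c : ι) (a : Fin n → A) :
    disjointSum f i₀ (fun i => (c, a i)) = (f c a).map (c, ·) :=
  if_pos fun _ => rfl

lemma pdom_disjointSum_subset_iff {f f' : ι → NPlace A n} {i₀ : Fin n} :
    pdom (disjointSum f i₀) ⊆ pdom (disjointSum f' i₀) ↔ ∀ c, pdom (f c) ⊆ pdom (f' c) := by
  constructor
  · intro h c a ha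
    have hsum := h (a := fun i => (c, a i))
    simp only [mem_pdom, disjointSum_const_fst, Option.map_eq_some_iff] at hsum ha ⊢
    obtain ⟨v, hv⟩ := ha
    obtain ⟨-, v', hv', -⟩ := hsum ⟨_, v, hv, rfl⟩
    exact ⟨v', hv'⟩
  · intro h b hb
    obtain ⟨p, hp⟩ := mem_pdom.mp hb
    rw [disjointSum_eq_some_iff] at hp
    obtain ⟨v', hv'⟩ := mem_pdom.mp (h p.1 (mem_pdom.mpr ⟨_, hp.2⟩))
    exact mem_pdom.mpr ⟨(p.1, v'), disjointSum_eq_some_iff.mpr ⟨hp.1, hv'⟩⟩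

lemma eq_of_disjointSum_eq {f f' : ι → NPlace A n} {i₀ : Fin n}
    (h : disjointSum f i₀ = disjointSum f' i₀) (c : ι) : f c = f' c := by
  funext a
  have hc := congrFun h fun i => (c, a i)
  rw [disjointSum_const_fst, disjointSum_const_fst] at hc
  exact Option.map_injective (Prod.mk_right_injective c) hc

end PartialFunctions

namespace MengerSg

variable {G : Type u} {n : ℕ} (M : MengerSg G n)

@[simp]
lemma applyStr_nil (x : G) : M.applyStr x [] = x := rfl

@[simp]
lemma applyStr_cons (x : G) (p : Fin n × G) (L : List (Fin n × G)) :
    M.applyStr x (p :: L) = M.applyStr (M.op p.1 x p.2) L := rfl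

@[simp]
lemma mu_nil (i : Fin n) : M.mu i [] = none := rfl

lemma mu_cons (i : Fin n) (p : Fin n × G) (L : List (Fin n × G)) :
    M.mu i (p :: L) = if p.1 = i then some (M.applyStr p.2 L) else M.mu i L := rfl

lemma ne_nil_of_mu_eq_some {i : Fin n} {L : List (Fin n × G)} {m : G}
    (h : M.mu i L = some m) : L ≠ [] := by
  rintro rfl
  simp at h

lemma mu_cons_eq_update (i : Fin n) (y : G) (L : List (Fin n × G)) :
    (fun j => M.mu j ((i, y) :: L)) =
      Function.update (fun j => M.mu j L) i (some (M.applyStr y L)) := by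
  funext j
  by_cases hj : j = i
  · subst hj
    simp [mu_cons]
  · simp [mu_cons, hj, Ne.symm hj]

lemma rel_applyStr_of_lRegular {r : G → G → Prop} (hl : M.LRegular r) (L : List (Fin n × G))
    {x y : G} (h : r x y) : r (M.applyStr x L) (M.applyStr y L) := by
  induction L generalizing x y with
  | nil => exact h
  | cons p L ih => exact ih ((hl x y h).2 p.1 p.2)

lemma rel_applyStr_mu {r : G → G → Prop} (hl : M.LRegular r)
    (hop : ∀ i x y, r (M.op i x y) y) (x : G) {L : List (Fin n × G)} {j : Fin n} {m : G}
    (h : M.mu j L = some m) : r (M.applyStr x L) m := by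
  induction L generalizing x with
  | nil => simp at h
  | cons p L ih =>
    rw [mu_cons] at h
    split_ifs at h
    · cases h
      exact M.rel_applyStr_of_lRegular hl L (hop p.1 x p.2)
    · exact ih _ h

section Representation

variable {M}

lemma lRegular_pdom_subset {A : Type u} {P : G → NPlace A n} (hP : M.IsRep P) :
    M.LRegular fun g₁ g₂ => pdom (P g₁) ⊆ pdom (P g₂) := by
  intro x y h
  refine ⟨fun z => ?_, fun i z => ?_⟩
  · simp only [hP.1]
    exact pdom_superpose_mono h _
  · simp only [hP.2]
    exact pdom_opc_mono i h _

lemma vNegative_pdom_subset {A : Type u} {P : G → NPlace A n} (hP : M.IsRep P) :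
    M.VNegative fun g₁ g₂ => pdom (P g₁) ⊆ pdom (P g₂) := by
  refine ⟨fun x y i => ?_, fun x L _ j m h => M.rel_applyStr_mu (lRegular_pdom_subset hP)
    (fun i x y => ?_) x h⟩
  · simp only [hP.1]
    exact pdom_superpose_subset _ _ i
  · simp only [hP.2]
    exact pdom_opc_subset i _ _

lemma conditions_of_isRep {A : Type u} {P : G → NPlace A n} (hP : M.IsRep P)
    {χ π : G → G → Prop} (hχ : ∀ g₁ g₂, χ g₁ g₂ ↔ pdom (P g₁) ⊆ pdom (P g₂))
    (hπ : ∀ g₁ g₂, π g₁ g₂ ↔ pdom (P g₁) = pdom (P g₂)) :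
    QuasiOrder χ ∧ M.LRegular χ ∧ M.VNegative χ ∧ ∀ a b, π a b ↔ χ a b ∧ χ b a := by
  obtain rfl : χ = fun g₁ g₂ => pdom (P g₁) ⊆ pdom (P g₂) :=
    funext₂ fun g₁ g₂ => propext (hχ g₁ g₂)
  exact ⟨⟨fun _ => subset_rfl, fun _ _ _ => subset_trans⟩, lRegular_pdom_subset hP,
    vNegative_pdom_subset hP, fun a b => (hπ a b).trans Set.Subset.antisymm_iff⟩

end Representation

section Representable

variable {M} (hM : M.Representable)
include hM

lemma applyStr_sup (L : List (Fin n × G)) (x : G) (y : Fin n → G) :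
    M.applyStr (M.sup x y) L = M.sup x fun j => M.applyStr (y j) L := by
  induction L generalizing y with
  | nil => rfl
  | cons p L ih => rw [applyStr_cons, hM.2.2.1, ih]; rfl

lemma applyStr_eq_of_mu_eq {L₁ L₂ : List (Fin n × G)} (h : ∀ i, M.mu i L₁ = M.mu i L₂)
    (g : G) : M.applyStr g L₁ = M.applyStr g L₂ := by
  have nil_of_nil : ∀ {L L' : List (Fin n × G)},
      (∀ i, M.mu i L = M.mu i L') → L = [] → L' = [] := by
    rintro L (_ | ⟨p, L'⟩) h rfl
    · rfl
    · simpa [mu_cons] using h p.1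
  by_cases h₁ : L₁ = []
  · rw [h₁, nil_of_nil h h₁]
  · exact hM.1 _ _ h₁ (fun h₂ => h₁ (nil_of_nil (fun i => (h i).symm) h₂)) h g

end Representable

open Classical in
/-- The action of `G` on `Option G`, where `none` is a placeholder: a tuple of elements `w` is
fed in by superposition, and a tuple `(μ₁(L), …, μₙ(L))` by applying the composition string `L`. -/
noncomputable def regAct (g : G) : NPlace (Option G) n := fun t =>
  if h : ∀ i, (t i).isSome then some (some (M.sup g fun i => (t i).get (h i)))
  else if h : ∃ L, (fun i => M.mu i L) = t then some (some (M.applyStr g h.choose))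
  else none

lemma regAct_some (g : G) (w : Fin n → G) :
    M.regAct g (fun i => some (w i)) = some (some (M.sup g w)) :=
  dif_pos fun _ => rfl

lemma regAct_mu (hn : 1 ≤ n) (hM : M.Representable) (g : G) (L : List (Fin n × G)) :
    M.regAct g (fun i => M.mu i L) = some (some (M.applyStr g L)) := by
  unfold regAct
  split_ifs with hs hL
  · -- a string all of whose `μᵢ` are defined acts by superposition, axiom (7)
    have hne : L ≠ [] := by
      obtain ⟨m, hm⟩ := Option.isSome_iff_exists.mp (hs ⟨0, hn⟩)
      exact M.ne_nil_of_mu_eq_some hm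
    rw [hM.2.2.2 L hne _ (fun i => (Option.some_get (hs i)).symm) g]
  · rw [applyStr_eq_of_mu_eq hM (congrFun hL.choose_spec)]
  · exact absurd ⟨L, rfl⟩ hL

lemma regAct_cases (t : Fin n → Option G) :
    (∃ w : Fin n → G, t = fun i => some (w i)) ∨ (∃ L, t = fun i => M.mu i L) ∨
      ∀ g, M.regAct g t = none := by
  by_cases hs : ∀ i, (t i).isSome
  · exact Or.inl ⟨fun i => (t i).get (hs i), funext fun i => (Option.some_get (hs i)).symm⟩
  by_cases hL : ∃ L, (fun i => M.mu i L) = t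
  · obtain ⟨L, hL⟩ := hL
    exact Or.inr (Or.inl ⟨L, hL.symm⟩)
  · exact Or.inr (Or.inr fun g => by simp only [regAct, dif_neg hs, dif_neg hL])

lemma isRep_regAct (hn : 1 ≤ n) (hM : M.Representable) : M.IsRep M.regAct := by
  constructor
  · intro x y
    funext t
    obtain ⟨w, rfl⟩ | ⟨L, rfl⟩ | hnone := M.regAct_cases t
    · rw [regAct_some, superpose_of_forall_eq_some fun i => M.regAct_some (y i) w,
        regAct_some, M.superassoc]
    · rw [M.regAct_mu hn hM, superpose_of_forall_eq_some fun i => M.regAct_mu hn hM (y i) L,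
        regAct_some, applyStr_sup hM]
    · rw [hnone, superpose_of_eq_none (i := ⟨0, hn⟩) (hnone _)]
  · intro i x y
    funext t
    obtain ⟨w, rfl⟩ | ⟨L, rfl⟩ | hnone := M.regAct_cases t
    · have hupd : Function.update (fun j => some (w j)) i (some (M.sup y w)) =
          fun j => some (Function.update w i (M.sup y w) j) :=
        (Function.comp_update some w i _).symm
      rw [regAct_some, opc, regAct_some, Option.bind_some, hupd, regAct_some, hM.2.1]
    · rw [M.regAct_mu hn hM, opc, M.regAct_mu hn hM, Option.bind_some,
        ← mu_cons_eq_update, M.regAct_mu hn hM]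
      rfl
    · rw [hnone, opc, hnone, Option.bind_none]

-- `none` lies in every sheet: it occurs as an argument of `regAct`, never as a value.
def sheet (χ : G → G → Prop) (a : G) : Set (Option G) := {o | ∀ v ∈ o, χ a v}

@[simp]
lemma some_mem_sheet {χ : G → G → Prop} {a v : G} : some v ∈ sheet χ a ↔ χ a v := by
  simp [sheet]

lemma regAct_arg_mem_sheet (hn : 1 ≤ n) (hM : M.Representable) {χ : G → G → Prop}
    (htr : Transitive χ) (hv : M.VNegative χ) {a x : G} {t : Fin n → Option G} {o : Option G}
    (ho : M.regAct x t = some o) (hoa : o ∈ sheet χ a) (i : Fin n) : t i ∈ sheet χ a := by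
  obtain ⟨w, rfl⟩ | ⟨L, rfl⟩ | hnone := M.regAct_cases t
  · rw [regAct_some, Option.some_inj] at ho
    subst ho
    exact some_mem_sheet.mpr (htr (some_mem_sheet.mp hoa) (hv.1 x w i))
  · rw [M.regAct_mu hn hM, Option.some_inj] at ho
    subst ho
    intro u hu
    exact htr (some_mem_sheet.mp hoa) (hv.2 x L (M.ne_nil_of_mu_eq_some hu) i u hu)
  · simp [hnone] at ho

variable {M}

lemma IsRep.restrictCod {A : Type u} {P : G → NPlace A n} (hP : M.IsRep P) {S : Set A}
    (hS : ∀ g a v i, P g a = some v → v ∈ S → a i ∈ S) :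
    M.IsRep fun g => _root_.restrictCod (P g) S := by
  constructor
  · intro x y
    funext a
    refine Option.ext fun v => ?_
    simp only [restrictCod_eq_some_iff, hP.1, superpose_eq_some_iff]
    constructor
    · rintro ⟨⟨b, hb, hv⟩, hvS⟩
      exact ⟨b, fun i => ⟨hb i, hS _ _ _ i hv hvS⟩, hv, hvS⟩
    · rintro ⟨b, hb, hv, hvS⟩
      exact ⟨⟨b, fun i => (hb i).1, hv⟩, hvS⟩
  · intro i x y
    funext a
    refine Option.ext fun v => ?_
    simp only [restrictCod_eq_some_iff, hP.2, opc_eq_some_iff]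
    constructor
    · rintro ⟨⟨u, hu, hv⟩, hvS⟩
      exact ⟨u, ⟨hu, by simpa using hS _ _ _ i hv hvS⟩, hv, hvS⟩
    · rintro ⟨u, ⟨hu, -⟩, hv, hvS⟩
      exact ⟨⟨u, hu, hv⟩, hvS⟩

lemma IsRep.disjointSum {A ι : Type u} {P : ι → G → NPlace A n} (hP : ∀ c, M.IsRep (P c))
    (i₀ : Fin n) : M.IsRep fun g => _root_.disjointSum (fun c => P c g) i₀ := by
  constructor
  · intro x y
    funext b
    refine Option.ext fun p => ?_
    simp only [disjointSum_eq_some_iff, (hP _).1, superpose_eq_some_iff]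
    constructor
    · rintro ⟨hb, w, hw, hv⟩
      exact ⟨fun j => (p.1, w j), fun j => ⟨hb, hw j⟩, fun _ => rfl, hv⟩
    · rintro ⟨B, hB, hBp, hv⟩
      refine ⟨fun i => ((hB i₀).1 i).trans (hBp i₀), fun j => (B j).2, fun j => ?_, hv⟩
      simpa only [← hBp j] using (hB j).2
  · intro i x y
    funext b
    refine Option.ext fun p => ?_
    simp only [disjointSum_eq_some_iff, (hP _).2, opc_eq_some_iff, Function.comp_update]
    constructor
    · rintro ⟨hb, u, hu, hv⟩
      refine ⟨(p.1, u), ⟨hb, hu⟩, fun k => ?_, hv⟩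
      by_cases hk : k = i
      · subst hk
        simp
      · simp [hk, hb k]
    · rintro ⟨q, ⟨hbq, hq⟩, hupd, hv⟩
      have hqp : q.1 = p.1 := by simpa using hupd i
      exact ⟨fun k => (hbq k).trans hqp, q.2, hqp ▸ hq, hv⟩

variable (M) (χ : G → G → Prop)

noncomputable def sheetRep (a g : G) : NPlace (Option G) n := restrictCod (M.regAct g) (sheet χ a)

noncomputable def projRep (hn : 1 ≤ n) (g : G) : NPlace (G × Option G) n :=
  disjointSum (fun a => M.sheetRep χ a g) ⟨0, hn⟩

variable {M χ}

lemma isRep_projRep (hn : 1 ≤ n) (hM : M.Representable) (htr : Transitive χ)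
    (hv : M.VNegative χ) : M.IsRep (M.projRep χ hn) :=
  IsRep.disjointSum (fun _ => (M.isRep_regAct hn hM).restrictCod
    fun _ _ _ i ho hoa => M.regAct_arg_mem_sheet hn hM htr hv ho hoa i) _

lemma pdom_sheetRep_mono (hn : 1 ≤ n) (hM : M.Representable) (htr : Transitive χ)
    (hl : M.LRegular χ) (a : G) {g₁ g₂ : G} (h : χ g₁ g₂) :
    pdom (M.sheetRep χ a g₁) ⊆ pdom (M.sheetRep χ a g₂) := by
  intro t
  simp only [mem_pdom, sheetRep, restrictCod_eq_some_iff]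
  rintro ⟨o, ho, hoa⟩
  obtain ⟨w, rfl⟩ | ⟨L, rfl⟩ | hnone := M.regAct_cases t
  · rw [regAct_some, Option.some_inj] at ho
    subst ho
    exact ⟨_, M.regAct_some g₂ w, some_mem_sheet.mpr
      (htr (some_mem_sheet.mp hoa) ((hl g₁ g₂ h).1 w))⟩
  · rw [M.regAct_mu hn hM, Option.some_inj] at ho
    subst ho
    exact ⟨_, M.regAct_mu hn hM g₂ L, some_mem_sheet.mpr
      (htr (some_mem_sheet.mp hoa) (M.rel_applyStr_of_lRegular hl L h))⟩
  · simp [hnone] at ho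

open Classical in
lemma sheetRep_nones (hn : 1 ≤ n) (hM : M.Representable) (a g : G) :
    M.sheetRep χ a g (fun _ => none) = if χ a g then some (some g) else none := by
  have h := M.regAct_mu hn hM g []
  simp only [mu_nil, applyStr_nil] at h
  simp only [sheetRep, restrictCod, h, Option.filter_some]
  simp

lemma pdom_projRep_subset_iff (hn : 1 ≤ n) (hM : M.Representable) (hrefl : Reflexive χ)
    (htr : Transitive χ) (hl : M.LRegular χ) {g₁ g₂ : G} :
    pdom (M.projRep χ hn g₁) ⊆ pdom (M.projRep χ hn g₂) ↔ χ g₁ g₂ := by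
  rw [projRep, projRep, pdom_disjointSum_subset_iff]
  refine ⟨fun h => ?_, fun h a => pdom_sheetRep_mono hn hM htr hl a h⟩
  -- the tuple of placeholders in the sheet of `g₁` detects `χ g₁ g₂`
  have hmem := h g₁ (a := fun _ => none) (by simp [mem_pdom, sheetRep_nones hn hM, hrefl g₁])
  simpa [mem_pdom, sheetRep_nones hn hM] using hmem

lemma projRep_injective (hn : 1 ≤ n) (hM : M.Representable) (hrefl : Reflexive χ) :
    Function.Injective (M.projRep χ hn) := by
  intro g₁ g₂ h
  have hg := congrFun (eq_of_disjointSum_eq h g₁) fun _ => none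
  rw [sheetRep_nones hn hM, sheetRep_nones hn hM, if_pos (hrefl g₁)] at hg
  split_ifs at hg
  simpa using hg

lemma exists_faithful_rep (hn : 1 ≤ n) (hM : M.Representable) {χ π : G → G → Prop}
    (hq : QuasiOrder χ) (hl : M.LRegular χ) (hv : M.VNegative χ)
    (hπ : ∀ a b, π a b ↔ χ a b ∧ χ b a) :
    ∃ (A : Type u) (P : G → NPlace A n), M.IsRep P ∧ Function.Injective P ∧
      (∀ g₁ g₂, χ g₁ g₂ ↔ pdom (P g₁) ⊆ pdom (P g₂)) ∧
      (∀ g₁ g₂, π g₁ g₂ ↔ pdom (P g₁) = pdom (P g₂)) := by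
  have hdom : ∀ g₁ g₂, χ g₁ g₂ ↔ pdom (M.projRep χ hn g₁) ⊆ pdom (M.projRep χ hn g₂) :=
    fun _ _ => (pdom_projRep_subset_iff hn hM hq.1 hq.2 hl).symm
  refine ⟨G × Option G, M.projRep χ hn, isRep_projRep hn hM hq.2 hv,
    projRep_injective hn hM hq.1, hdom, fun g₁ g₂ => ?_⟩
  rw [hπ, Set.Subset.antisymm_iff, hdom, hdom]

end MengerSg

/-- Theorem 4: the pair (χ, π); projection representability, faithful projection
representability and the algebraic condition are all equivalent. -/
theorem theorem4 {G : Type u} {n : ℕ} (hn : 1 ≤ n)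
    (M : MengerSg G n) (hM : M.Representable) (χ π : G → G → Prop) :
    ((∃ (A : Type u) (P : G → NPlace A n), M.IsRep P ∧
        (∀ g₁ g₂, χ g₁ g₂ ↔ pdom (P g₁) ⊆ pdom (P g₂)) ∧
        (∀ g₁ g₂, π g₁ g₂ ↔ pdom (P g₁) = pdom (P g₂))) ↔
      (QuasiOrder χ ∧ M.LRegular χ ∧ M.VNegative χ ∧
        ∀ a b, π a b ↔ χ a b ∧ χ b a)) ∧
    ((∃ (A : Type u) (P : G → NPlace A n), M.IsRep P ∧ Function.Injective P ∧
        (∀ g₁ g₂, χ g₁ g₂ ↔ pdom (P g₁) ⊆ pdom (P g₂)) ∧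
        (∀ g₁ g₂, π g₁ g₂ ↔ pdom (P g₁) = pdom (P g₂))) ↔
      (QuasiOrder χ ∧ M.LRegular χ ∧ M.VNegative χ ∧
        ∀ a b, π a b ↔ χ a b ∧ χ b a)) := by
  refine ⟨⟨?_, ?_⟩, ⟨?_, ?_⟩⟩
  · rintro ⟨A, P, hP, hχ, hπ⟩
    exact conditions_of_isRep hP hχ hπ
  · rintro ⟨hq, hl, hv, hπ⟩
    obtain ⟨A, P, hP, -, hχ, hπ⟩ := exists_faithful_rep hn hM hq hl hv hπ
    exact ⟨A, P, hP, hχ, hπ⟩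
  · rintro ⟨A, P, hP, -, hχ, hπ⟩
    exact conditions_of_isRep hP hχ hπ
  · rintro ⟨hq, hl, hv, hπ⟩
    exact exists_faithful_rep hn hM hq hl hv hπ
end

section
/- Proposition 4: Let G be a representable Menger (2,n)-semigroup and π an l-regular equivalence relation on G. Then χ(π) is an l-regular and v-negative quasi-order containing π, and χ(π) is the least such relation: χ(π) ⊆ χ for every l-regular and v-negative quasi-order χ on G with π ⊆ χ. -/
universe u

open MengerSg

/-!
Each of `π`, `δ₁`, `δ₂` is l-regular. A right translation `_[z̄]` (by superassociativity) or
`_ ∘ᵢ z` (by condition (6)) can be pushed through an element of `Tₙ(G)`, turning it into another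
one, which handles `δ₁`; for `δ₂`, `_ ∘ᵢ z` either extends the composition string by `(i, z)` or
is absorbed into the common `z̄`. l-regularity survives relational composition, union with the
identity and transitive closure. Conversely, a v-negative quasi-order contains `δ₁`, because
`a[… t(x) …]` lies below `t(x)`, and, when l-regular, also `δ₂`; so if it contains `π` it contains
every generator of `χ(π)`.
-/

namespace MengerSg

variable {G : Type u} {n : ℕ} (M : MengerSg G n)

def OpSupDistrib : Prop :=
  ∀ (i : Fin n) (x : G) (y : Fin n → G) (z : G),
    M.op i (M.sup x y) z = M.sup x fun j => M.op i (y j) z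

variable {M}

theorem Representable.opSupDistrib (hM : M.Representable) : M.OpSupDistrib :=
  hM.2.2.1

lemma applyStr_append_singleton (x : G) (L : List (Fin n × G)) (p : Fin n × G) :
    M.applyStr x (L ++ [p]) = M.op p.1 (M.applyStr x L) p.2 := by
  simp [applyStr, List.foldl_append]

lemma mu_append_singleton {j : Fin n} {L : List (Fin n × G)} {m : G}
    (h : M.mu j L = some m) (p : Fin n × G) :
    M.mu j (L ++ [p]) = some (M.op p.1 m p.2) := by
  induction L with
  | nil => simp [mu] at h
  | cons q rest ih =>
    by_cases hq : q.1 = j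
    · simp only [mu, hq, if_true, Option.some.injEq] at h
      simp only [List.cons_append, mu, hq, if_true, ← h]
      exact congrArg some (applyStr_append_singleton q.2 rest p)
    · simp only [mu, hq, if_false] at h
      simpa only [List.cons_append, mu, hq, if_false] using ih h

lemma lRegular_eq : M.LRegular Eq := by
  rintro x _ rfl
  exact ⟨fun _ => rfl, fun _ _ => rfl⟩

lemma LRegular.or {r s : G → G → Prop} (hr : M.LRegular r) (hs : M.LRegular s) :
    M.LRegular fun a b => r a b ∨ s a b := by
  rintro x y (h | h)
  · exact ⟨fun z => .inl ((hr x y h).1 z), fun i z => .inl ((hr x y h).2 i z)⟩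
  · exact ⟨fun z => .inr ((hs x y h).1 z), fun i z => .inr ((hs x y h).2 i z)⟩

lemma LRegular.comp {r s : G → G → Prop} (hr : M.LRegular r) (hs : M.LRegular s) :
    M.LRegular (Relation.Comp r s) := by
  rintro x y ⟨w, hxw, hwy⟩
  exact ⟨fun z => ⟨_, (hr x w hxw).1 z, (hs w y hwy).1 z⟩,
    fun i z => ⟨_, (hr x w hxw).2 i z, (hs w y hwy).2 i z⟩⟩

lemma LRegular.transGen {r : G → G → Prop} (hr : M.LRegular r) :
    M.LRegular (Relation.TransGen r) :=
  fun _ _ h =>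
    ⟨fun z => Relation.TransGen.lift (M.sup · z) (fun a b hab => (hr a b hab).1 z) _ _ h,
      fun i z => Relation.TransGen.lift (M.op i · z) (fun a b hab => (hr a b hab).2 i z) _ _ h⟩

lemma IsTransl.exists_comm {f : G → G} (hf : ∀ a b, f (M.sup a b) = M.sup a (f ∘ b))
    {t : G → G} (ht : IsTransl M t) : ∃ t', IsTransl M t' ∧ ∀ x, f (t x) = t' (f x) := by
  induction ht with
  | id => exact ⟨_root_.id, .id, fun _ => rfl⟩
  | step t₀ _ i a b ih =>
    obtain ⟨t', ht', ht₀t'⟩ := ih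
    refine ⟨fun w => M.sup a (Function.update (f ∘ b) i (t' w)), .step t' ht' i a _, fun x => ?_⟩
    rw [hf, Function.comp_update, ht₀t']

lemma delta1_map {f : G → G} (hf : ∀ a b, f (M.sup a b) = M.sup a (f ∘ b)) {x y : G}
    (h : delta1 M x y) : delta1 M (f x) (f y) := by
  obtain ⟨t, ht, rfl⟩ := h
  obtain ⟨t', ht', hcomm⟩ := ht.exists_comm hf
  exact ⟨t', ht', hcomm y⟩

lemma lRegular_delta1 (h6 : M.OpSupDistrib) : M.LRegular (delta1 M) :=
  fun _ _ h => ⟨fun z => delta1_map (f := (M.sup · z)) (fun _ _ => M.superassoc ..) h,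
    fun i z => delta1_map (f := (M.op i · z)) (fun _ _ => h6 ..) h⟩

lemma lRegular_delta2 (h6 : M.OpSupDistrib) : M.LRegular (delta2 M) := by
  rintro _ _ ⟨x, L, j, m, hL, hmu, ⟨rfl, rfl⟩ | ⟨w, rfl, rfl⟩⟩
  · exact ⟨fun z => ⟨x, L, j, _, hL, hmu, .inr ⟨z, rfl, rfl⟩⟩,
      fun i z => ⟨x, L ++ [(i, z)], j, _, by simp, mu_append_singleton hmu _,
        .inl ⟨(applyStr_append_singleton x L (i, z)).symm, rfl⟩⟩⟩
  · exact ⟨fun z => ⟨x, L, j, _, hL, hmu,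
        .inr ⟨fun k => M.sup (w k) z, M.superassoc .., M.superassoc ..⟩⟩,
      fun i z => ⟨x, L, j, _, hL, hmu, .inr ⟨fun k => M.op i (w k) z, h6 .., h6 ..⟩⟩⟩

lemma delta1_sup (x : G) (y : Fin n → G) (i : Fin n) : delta1 M (M.sup x y) (y i) :=
  ⟨_, .step id .id i x y, by simp⟩

lemma lRegular_chiRel (h6 : M.OpSupDistrib) {π : G → G → Prop} (hπ : M.LRegular π) :
    M.LRegular (chiRel M π) :=
  ((hπ.comp (lRegular_delta1 h6)).comp ((lRegular_delta2 h6).or lRegular_eq)).transGen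

lemma chiRel_of_rel {π : G → G → Prop} {a b : G} (h : π a b) : chiRel M π a b :=
  .single ⟨b, ⟨b, h, id, .id, rfl⟩, .inr rfl⟩

lemma chiRel_of_delta1 {π : G → G → Prop} (hπ : ∀ a, π a a) {a b : G} (h : delta1 M a b) :
    chiRel M π a b :=
  .single ⟨b, ⟨a, hπ a, h⟩, .inr rfl⟩

lemma chiRel_of_delta2 {π : G → G → Prop} (hπ : ∀ a, π a a) {a b : G} (h : delta2 M a b) :
    chiRel M π a b :=
  .single ⟨a, ⟨a, hπ a, id, .id, rfl⟩, .inl h⟩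

lemma quasiOrder_chiRel {π : G → G → Prop} (hπ : ∀ a, π a a) : QuasiOrder (chiRel M π) :=
  ⟨fun a => chiRel_of_rel (hπ a), fun _ _ _ => .trans⟩

lemma vNegative_chiRel {π : G → G → Prop} (hπ : ∀ a, π a a) : M.VNegative (chiRel M π) :=
  ⟨fun x y i => chiRel_of_delta1 hπ (delta1_sup x y i),
    fun x L hL j m hmu => chiRel_of_delta2 hπ ⟨x, L, j, m, hL, hmu, .inl ⟨rfl, rfl⟩⟩⟩

lemma VNegative.delta1_le {χ : G → G → Prop} (hχ : QuasiOrder χ) (hneg : M.VNegative χ) {a b : G}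
    (h : delta1 M a b) : χ a b := by
  obtain ⟨t, ht, rfl⟩ := h
  induction ht with
  | id => exact hχ.1 b
  | step t₀ _ i a c ih =>
    exact hχ.2 (by simpa using hneg.1 a (Function.update c i (t₀ b)) i) ih

lemma VNegative.delta2_le {χ : G → G → Prop} (hreg : M.LRegular χ) (hneg : M.VNegative χ) {a b : G}
    (h : delta2 M a b) : χ a b := by
  obtain ⟨x, L, i, m, hL, hmu, ⟨rfl, rfl⟩ | ⟨z, rfl, rfl⟩⟩ := h
  · exact hneg.2 x L hL i _ hmu
  · exact (hreg _ _ (hneg.2 x L hL i _ hmu)).1 z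

lemma chiRel_le {χ : G → G → Prop} (hχ : QuasiOrder χ) (hreg : M.LRegular χ)
    (hneg : M.VNegative χ) {π : G → G → Prop} (hπχ : ∀ a b, π a b → χ a b) : chiRel M π ≤ χ := by
  have : IsTrans G χ := ⟨fun a b c => @hχ.2 a b c⟩
  refine Relation.transGen_minimal ?_
  rintro a b ⟨d, ⟨c, hac, hcd⟩, hdb⟩
  refine hχ.2 (hπχ a c hac) (hχ.2 (hneg.delta1_le hχ hcd) ?_)
  rcases hdb with hdb | rfl
  · exact hneg.delta2_le hreg hdb
  · exact hχ.1 d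

end MengerSg

theorem prop4_general {G : Type u} {n : ℕ}
    (M : MengerSg G n) (hM : M.Representable) (π : G → G → Prop)
    (hπ : Equivalence π) (hπreg : M.LRegular π) :
    (QuasiOrder (chiRel M π) ∧ M.LRegular (chiRel M π) ∧ M.VNegative (chiRel M π) ∧
        ∀ a b, π a b → chiRel M π a b) ∧
      ∀ χ : G → G → Prop, QuasiOrder χ → M.LRegular χ → M.VNegative χ →
        (∀ a b, π a b → χ a b) → ∀ a b, chiRel M π a b → χ a b :=
  ⟨⟨quasiOrder_chiRel hπ.refl, lRegular_chiRel hM.opSupDistrib hπreg, vNegative_chiRel hπ.refl,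
      fun _ _ => chiRel_of_rel⟩,
    fun _ hχ hreg hneg hπχ => chiRel_le hχ hreg hneg hπχ⟩

/-- Proposition 4: χ(π) is the least l-regular and v-negative quasi-order containing π. -/
theorem prop4 {G : Type u} {n : ℕ} (hn : 1 ≤ n)
    (M : MengerSg G n) (hM : M.Representable) (π : G → G → Prop)
    (hπ : Equivalence π) (hπreg : M.LRegular π) :
    (QuasiOrder (chiRel M π) ∧ M.LRegular (chiRel M π) ∧ M.VNegative (chiRel M π) ∧
        ∀ a b, π a b → chiRel M π a b) ∧
      ∀ χ : G → G → Prop, QuasiOrder χ → M.LRegular χ → M.VNegative χ →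
        (∀ a b, π a b → χ a b) → ∀ a b, chiRel M π a b → χ a b :=
  prop4_general M hM π hπ hπreg
end
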